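/- arXiv:2106.04480 — 2 statements merged into one kernel-verified Lean document; each statement's English description precedes it below -/
import Mathlib

section
/- For a fixed finite sequence in which state s occurs exactly k ≥ 2 times, if the middle block counts of s' are all equal, n_1(s') = n_2(s') = … = n_{k-1}(s'), then #(s→s') − #(s'→s) = k · (n_k(s') − n_0(s')). -/
open Finset

/-- `#(s→s')`: number of index pairs `i < j` with `f i = s` and `f j = s'`. -/
def pairCount {S : Type*} [DecidableEq S] {n : ℕ} (f : Fin n → S) (s s' : S) : ℕ :=
  ((Finset.univ : Finset (Fin n × Fin n)).filter
    (fun p => p.1 < p.2 ∧ f p.1 = s ∧ f p.2 = s')).card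

/-- `n_i(s')`: number of occurrences of `s'` in the `i`-th block, i.e. positions `j`
with `f j = s'` preceded by exactly `i` occurrences of `s`. -/
def blockCount {S : Type*} [DecidableEq S] {n : ℕ} (f : Fin n → S) (s s' : S) (i : ℕ) : ℕ :=
  ((Finset.univ : Finset (Fin n)).filter
    (fun j => f j = s' ∧ ((Finset.univ : Finset (Fin n)).filter
      (fun l => l < j ∧ f l = s)).card = i)).card

/-!
Every occurrence of `s'` in block `i` is preceded by exactly `i` and followed by exactly `k - i`
occurrences of `s`, so `#(s→s') - #(s'→s) = ∑ᵢ nᵢ(s') (2i - k)`. The weights `2i - k` are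
antisymmetric under `i ↦ k - i` and hence sum to zero; so if the middle counts all equal `c`,
replacing every `nᵢ(s')` by `nᵢ(s') - c` leaves only the two end blocks, contributing
`k (n_k(s') - n_0(s'))`.
-/

theorem sum_range_two_mul_sub_eq_zero (m : ℕ) : ∑ i ∈ range (m + 1), (2 * i - m : ℤ) = 0 := by
  have h := sum_range_reflect (fun i : ℕ => (2 * i - m : ℤ)) (m + 1)
  have hneg : ∀ i ∈ range (m + 1), (2 * ((m + 1 - 1 - i : ℕ) : ℤ) - m) = -(2 * i - m) := by
    intro i hi
    rw [Nat.add_sub_cancel, Nat.cast_sub (mem_range_succ_iff.1 hi)]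
    ring
  rw [sum_congr rfl hneg, sum_neg_distrib] at h
  linarith

theorem sum_range_mul_two_mul_sub_of_eq_const (a : ℕ → ℤ) (k : ℕ) (c : ℤ)
    (h : ∀ i, 0 < i → i < k → a i = c) :
    ∑ i ∈ range (k + 1), a i * (2 * i - k) = k * (a k - a 0) := by
  calc ∑ i ∈ range (k + 1), a i * (2 * i - k)
      = ∑ i ∈ range (k + 1), (a i - c) * (2 * i - k) := by
        have hc : ∑ i ∈ range (k + 1), c * (2 * i - k : ℤ) = 0 := by
          rw [← mul_sum, sum_range_two_mul_sub_eq_zero, mul_zero]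
        simp only [sub_mul, sum_sub_distrib, hc, sub_zero]
    _ = ∑ i ∈ {0, k}, (a i - c) * (2 * i - k) := by
        refine (sum_subset (by simp [insert_subset_iff]) fun i hi hi' => ?_).symm
        rw [h i (by grind) (by grind), sub_self, zero_mul]
    _ = k * (a k - a 0) := by
        obtain rfl | hk := eq_or_ne k 0
        · simp
        · rw [sum_pair hk.symm]
          push_cast
          ring

section Counting

variable {S : Type*} [DecidableEq S] {n : ℕ} (f : Fin n → S) (s s' : S)

def countBefore (j : Fin n) : ℕ := #{l | l < j ∧ f l = s}

def countAfter (j : Fin n) : ℕ := #{l | j < l ∧ f l = s}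

theorem blockCount_eq_card_countBefore_eq (i : ℕ) :
    blockCount f s s' i = #{j | f j = s' ∧ countBefore f s j = i} := rfl

theorem pairCount_eq_sum_countBefore :
    pairCount f s s' = ∑ j with f j = s', countBefore f s j := by
  rw [pairCount, card_eq_sum_card_fiberwise (f := Prod.snd) (t := {j | f j = s'})
    fun p hp => by simp_all]
  refine sum_congr rfl fun j hj => card_bij' (fun p _ => p.1) (fun l _ => (l, j)) ?_ ?_ ?_ ?_ <;>
    aesop

theorem pairCount_swap_eq_sum_countAfter :
    pairCount f s' s = ∑ j with f j = s', countAfter f s j := by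
  rw [pairCount, card_eq_sum_card_fiberwise (f := Prod.fst) (t := {j | f j = s'})
    fun p hp => by simp_all]
  refine sum_congr rfl fun j hj => card_bij' (fun p _ => p.2) (fun l _ => (j, l)) ?_ ?_ ?_ ?_ <;>
    aesop

variable {f s}

theorem countBefore_add_countAfter {j : Fin n} (hj : f j ≠ s) :
    countBefore f s j + countAfter f s j = #{l | f l = s} := by
  rw [countBefore, countAfter, ← card_union_of_disjoint
    (disjoint_filter.2 fun l _ h h' => lt_asymm h.1 h'.1)]
  congr 1
  ext l
  simp only [mem_union, mem_filter, mem_univ, true_and]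
  rcases lt_trichotomy l j with hl | rfl | hl <;> grind

theorem countBefore_le (j : Fin n) : countBefore f s j ≤ #{l | f l = s} :=
  card_le_card (monotone_filter_right _ fun _ _ h => h.2)

theorem sum_countBefore_eq_sum_blockCount {k : ℕ} (hk : #{l | f l = s} = k) (g : ℕ → ℤ) :
    ∑ j with f j = s', g (countBefore f s j) =
      ∑ i ∈ range (k + 1), blockCount f s s' i * g i := by
  rw [← sum_fiberwise_of_maps_to (g := countBefore f s) (t := range (k + 1))
    fun j _ => mem_range_succ_iff.2 (hk ▸ countBefore_le j)]
  refine sum_congr rfl fun i _ => ?_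
  rw [sum_congr rfl fun j hj => congrArg g (mem_filter.1 hj).2, sum_const,
    blockCount_eq_card_countBefore_eq, filter_filter, nsmul_eq_mul]

end Counting

theorem pairCount_sub_pairCount_swap_general {S : Type*} [DecidableEq S] {n : ℕ}
    (f : Fin n → S) (s s' : S) (hss' : s ≠ s') (k : ℕ)
    (hk : ((Finset.univ : Finset (Fin n)).filter (fun j => f j = s)).card = k)
    (hmid : ∀ i j : ℕ, 1 ≤ i → i ≤ k - 1 → 1 ≤ j → j ≤ k - 1 →
      blockCount f s s' i = blockCount f s s' j) :
    (pairCount f s s' : ℤ) - (pairCount f s' s : ℤ) =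
      (k : ℤ) * ((blockCount f s s' k : ℤ) - (blockCount f s s' 0 : ℤ)) := by
  have hafter : ∀ j, f j = s' → (countAfter f s j : ℤ) = k - countBefore f s j := fun j hj => by
    rw [← hk, ← countBefore_add_countAfter (hj.trans_ne hss'.symm)]
    push_cast
    ring
  calc (pairCount f s s' : ℤ) - pairCount f s' s
      = ∑ j with f j = s', (2 * countBefore f s j - k : ℤ) := by
        rw [pairCount_eq_sum_countBefore, pairCount_swap_eq_sum_countAfter]
        push_cast
        rw [← sum_sub_distrib]
        refine sum_congr rfl fun j hj => ?_
        rw [hafter j (mem_filter.1 hj).2]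
        ring
    _ = ∑ i ∈ range (k + 1), blockCount f s s' i * (2 * i - k : ℤ) :=
        sum_countBefore_eq_sum_blockCount s' hk fun i => 2 * i - k
    _ = k * (blockCount f s s' k - blockCount f s s' 0) :=
        sum_range_mul_two_mul_sub_of_eq_const _ k _ fun i hi hik =>
          congrArg _ <| hmid i 1 hi (by omega) le_rfl (by omega)

/-- if `s` occurs exactly `k ≥ 2` times in `f` and the middle block
counts `n_1(s') = … = n_{k-1}(s')` are all equal, then
`#(s→s') − #(s'→s) = k · (n_k(s') − n_0(s'))`. -/
theorem pairCount_sub_pairCount_swap {S : Type*} [DecidableEq S] {n : ℕ}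
    (f : Fin n → S) (s s' : S) (hss' : s ≠ s') (k : ℕ) (hk2 : 2 ≤ k)
    (hk : ((Finset.univ : Finset (Fin n)).filter (fun j => f j = s)).card = k)
    (hmid : ∀ i j : ℕ, 1 ≤ i → i ≤ k - 1 → 1 ≤ j → j ≤ k - 1 →
      blockCount f s s' i = blockCount f s s' j) :
    (pairCount f s s' : ℤ) - (pairCount f s' s : ℤ) =
      (k : ℤ) * ((blockCount f s s' k : ℤ) - (blockCount f s s' 0 : ℤ)) :=
  pairCount_sub_pairCount_swap_general f s s' hss' k hk hmid
end

section
/- Let π be a policy with π(a|s) ≥ ρ > 0 for all s, a, and let φ_{π,K}(s,a) = p_π(s ∈ τ_{t+1:t+K+1} | s_t = s, a_t = a) and φ_K(s,a) = sup_{π'} φ_{π',K}(s,a). Then φ_{π,K}(s,a) ≥ ρ^K · φ_K(s,a). -/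
open Finset

/-- Probability of a given `K`-step state path `(s_{t+1}, …, s_{t+K+1})` after the
transition `(s, a)`, under transition kernel `P` and policy `pol`. -/
def pathProb {S A : Type*} [Fintype A] (P : S → A → S → ℝ) (pol : S → A → ℝ)
    (s : S) (a : A) {K : ℕ} (path : Fin (K + 1) → S) : ℝ :=
  P s a (path 0) *
    ∏ i : Fin K, ∑ b : A, pol (path i.castSucc) b * P (path i.castSucc) b (path i.succ)

/-- `φ_{pol,K}(s,a) = p_pol(s ∈ τ_{t+1:t+K+1} | s_t = s, a_t = a)`: the probability,
following policy `pol` after the transition `(s, a)`, of returning to `s` within the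
next `K+1` visited states. -/
def phiPol {S A : Type*} [Fintype S] [Fintype A] [DecidableEq S]
    (P : S → A → S → ℝ) (pol : S → A → ℝ) (K : ℕ) (s : S) (a : A) : ℝ :=
  ∑ path ∈ (Finset.univ : Finset (Fin (K + 1) → S)).filter (fun path => ∃ i, path i = s),
    pathProb P pol s a path

/-- A valid (stochastic) policy. -/
def IsPolicy {S A : Type*} [Fintype A] (pol : S → A → ℝ) : Prop :=
  (∀ s a, 0 ≤ pol s a) ∧ ∀ s, ∑ a, pol s a = 1

/-! Each step of a path has weight `∑_b π(b|u) P(u,b,v)` under `π`, and since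
`π(b|u) ≥ ρ ≥ ρ π'(b|u)` this is at least `ρ` times the weight under any policy `π'`.
Multiplying over the `K` steps, every path probability under `π` dominates `ρ^K` times the
one under `π'`, and the bound passes to the supremum over `π'`. -/

theorem IsPolicy.le_one {S A : Type*} [Fintype A] {pol : S → A → ℝ} (hpol : IsPolicy pol)
    (s : S) (a : A) : pol s a ≤ 1 :=
  hpol.2 s ▸ Finset.single_le_sum (fun b _ => hpol.1 s b) (Finset.mem_univ a)

section PathProb

variable {S A : Type*} [Fintype A] {P : S → A → S → ℝ} {pol pi : S → A → ℝ} {ρ : ℝ}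

theorem pathProb_nonneg (hP0 : ∀ s a s', 0 ≤ P s a s') (hpol : ∀ s a, 0 ≤ pol s a)
    (s : S) (a : A) {K : ℕ} (path : Fin (K + 1) → S) : 0 ≤ pathProb P pol s a path :=
  mul_nonneg (hP0 _ _ _) <| Finset.prod_nonneg fun _ _ =>
    Finset.sum_nonneg fun _ _ => mul_nonneg (hpol _ _) (hP0 _ _ _)

theorem mul_sum_mul_le_sum_mul (hP0 : ∀ s a s', 0 ≤ P s a s') (hpol : IsPolicy pol)
    (hρ : 0 ≤ ρ) (hpi : ∀ s a, ρ ≤ pi s a) (u v : S) :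
    ρ * ∑ b, pol u b * P u b v ≤ ∑ b, pi u b * P u b v := by
  rw [Finset.mul_sum]
  refine Finset.sum_le_sum fun b _ => ?_
  calc ρ * (pol u b * P u b v) = ρ * pol u b * P u b v := (mul_assoc _ _ _).symm
    _ ≤ pi u b * P u b v := by
      gcongr
      · exact hP0 u b v
      · exact (mul_le_of_le_one_right hρ (hpol.le_one u b)).trans (hpi u b)

theorem pow_mul_pathProb_le (hP0 : ∀ s a s', 0 ≤ P s a s') (hpol : IsPolicy pol)
    (hρ : 0 ≤ ρ) (hpi : ∀ s a, ρ ≤ pi s a) (s : S) (a : A) {K : ℕ}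
    (path : Fin (K + 1) → S) :
    ρ ^ K * pathProb P pol s a path ≤ pathProb P pi s a path := by
  rw [pathProb, pathProb, mul_left_comm, ← Fin.prod_const, ← Finset.prod_mul_distrib]
  gcongr
  · exact hP0 s a (path 0)
  · exact fun _ _ => mul_nonneg hρ <| sum_nonneg fun _ _ => mul_nonneg (hpol.1 _ _) (hP0 _ _ _)
  · exact mul_sum_mul_le_sum_mul hP0 hpol hρ hpi _ _

end PathProb

section PhiPol

variable {S A : Type*} [Fintype S] [Fintype A] [DecidableEq S] {P : S → A → S → ℝ}
  {pol pi : S → A → ℝ} {ρ : ℝ}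

theorem phiPol_nonneg (hP0 : ∀ s a s', 0 ≤ P s a s') (hpol : ∀ s a, 0 ≤ pol s a)
    (K : ℕ) (s : S) (a : A) : 0 ≤ phiPol P pol K s a :=
  Finset.sum_nonneg fun path _ => pathProb_nonneg hP0 hpol s a path

theorem pow_mul_phiPol_le (hP0 : ∀ s a s', 0 ≤ P s a s') (hpol : IsPolicy pol)
    (hρ : 0 ≤ ρ) (hpi : ∀ s a, ρ ≤ pi s a) (K : ℕ) (s : S) (a : A) :
    ρ ^ K * phiPol P pol K s a ≤ phiPol P pi K s a := by
  rw [phiPol, Finset.mul_sum]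
  exact Finset.sum_le_sum fun path _ => pow_mul_pathProb_le hP0 hpol hρ hpi s a path

end PhiPol

theorem phiPol_ge_rho_pow_mul_sup_general {S A : Type*} [Fintype S] [Fintype A] [DecidableEq S]
    (P : S → A → S → ℝ) (hP0 : ∀ s a s', 0 ≤ P s a s')
    (pi : S → A → ℝ) (ρ : ℝ) (hρ : 0 < ρ)
    (hpi : ∀ s a, ρ ≤ pi s a)
    (K : ℕ) (s : S) (a : A) :
    ρ ^ K * sSup {x : ℝ | ∃ pol : S → A → ℝ, IsPolicy pol ∧ x = phiPol P pol K s a} ≤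
      phiPol P pi K s a := by
  have hpi0 : ∀ s a, 0 ≤ pi s a := fun s a => hρ.le.trans (hpi s a)
  rw [← smul_eq_mul, ← Real.sSup_smul_of_nonneg (pow_nonneg hρ.le K)]
  refine Real.sSup_le ?_ (phiPol_nonneg hP0 hpi0 K s a)
  rintro _ ⟨_, ⟨pol, hpol, rfl⟩, rfl⟩
  exact pow_mul_phiPol_le hP0 hpol hρ.le hpi K s a

/-- if `π(a|s) ≥ ρ > 0` everywhere, then
`φ_{π,K}(s,a) ≥ ρ^K · φ_K(s,a)` where `φ_K(s,a) = sup_{π'} φ_{π',K}(s,a)`. -/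
theorem phiPol_ge_rho_pow_mul_sup {S A : Type*} [Fintype S] [Fintype A] [DecidableEq S]
    (P : S → A → S → ℝ) (hP0 : ∀ s a s', 0 ≤ P s a s') (hP1 : ∀ s a, ∑ s', P s a s' = 1)
    (pi : S → A → ℝ) (hpol : IsPolicy pi) (ρ : ℝ) (hρ : 0 < ρ)
    (hpi : ∀ s a, ρ ≤ pi s a)
    (K : ℕ) (s : S) (a : A) :
    ρ ^ K * sSup {x : ℝ | ∃ pol : S → A → ℝ, IsPolicy pol ∧ x = phiPol P pol K s a} ≤
      phiPol P pi K s a :=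
  phiPol_ge_rho_pow_mul_sup_general P hP0 pi ρ hρ hpi K s a
end
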